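/- Let m ≥ 2 be an integer and let H_m be the subgroup of GL₂(ℝ) generated by the image of SL₂(ℤ) and the diagonal matrix diag(m, 1). Then H_m contains every matrix A ∈ SL₂(ℝ) all of whose entries lie in the subring ℤ[1/m] of ℝ; that is, H_m contains SL₂(ℤ[1/m]): every 2×2 real matrix of determinant 1 of the form m^{−k}·B with k ≥ 0 an integer and B a matrix with integer entries belongs to H_m. -/

import Mathlib

open Matrix

/-- The diagonal matrix `diag(m, 1)` as an element of `GL₂(ℝ)`. -/
noncomputable def diagm (m : ℕ) (hm : 2 ≤ m) : GL (Fin 2) ℝ :=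
  Matrix.GeneralLinearGroup.mkOfDetNeZero (Matrix.diagonal ![(m : ℝ), 1])
    (by
      have hm0 : (m : ℝ) ≠ 0 := by positivity
      simp [Matrix.det_diagonal, Fin.prod_univ_two, hm0])

/-- `H_m`: the subgroup of `GL₂(ℝ)` generated by the image of `SL₂(ℤ)` and the diagonal
matrix `diag(m, 1)`. -/
noncomputable def Hm (m : ℕ) (hm : 2 ≤ m) : Subgroup (GL (Fin 2) ℝ) :=
  Subgroup.closure
    (Set.range
        (fun A : SpecialLinearGroup (Fin 2) ℤ =>
          SpecialLinearGroup.toGL (SpecialLinearGroup.map (Int.castRingHom ℝ) A)) ∪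
      {diagm m hm})

/-!
Conjugating the integral unipotents `!![1, n; 0, 1]` and `!![1, 0; n, 1]` by powers of
`diag(m, 1)` puts every unipotent with entry in `ℤ[1/m]` into `H_m`. For `A = m⁻ᵏ • B`, a
Bézout row moves `B` within its `SL₂(ℤ)`-orbit to a matrix with vanishing top-left entry, and
a determinant-one matrix `!![0, u; v, s]` is a product of three such unipotents.
-/

theorem exists_det_eq_one_mul_apply_zero_zero {R : Type*} [EuclideanDomain R] [GCDMonoid R]
    (B : Matrix (Fin 2) (Fin 2) R) :
    ∃ U : Matrix (Fin 2) (Fin 2) R, U.det = 1 ∧ (U * B) 0 0 = 0 := by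
  simp only [mul_apply, Fin.sum_univ_two]
  by_cases h : gcd (B 0 0) (B 1 0) = 0
  · rw [gcd_eq_zero_iff] at h
    exact ⟨1, det_one, by simp [h.1, h.2]⟩
  have hcop := isCoprime_div_gcd_div_gcd_of_gcd_ne_zero h
  set g := gcd (B 0 0) (B 1 0)
  obtain ⟨a, ha⟩ : g ∣ B 0 0 := gcd_dvd_left _ _
  obtain ⟨c, hc⟩ : g ∣ B 1 0 := gcd_dvd_right _ _
  rw [ha, hc, mul_div_cancel_left₀ _ h, mul_div_cancel_left₀ _ h] at hcop
  obtain ⟨x, y, hxy⟩ := hcop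
  refine ⟨!![c, -a; x, y], by rw [det_fin_two_of]; linear_combination hxy, ?_⟩
  show c * B 0 0 + -a * B 1 0 = 0
  rw [ha, hc]
  ring

theorem antidiag_eq_mul_unipotents {R : Type*} [CommRing R] (u v s : R) (h : u * v = -1) :
    !![0, u; v, s] = !![1, u; 0, 1] * !![1, 0; v, 1] * !![1, u * (1 - s); 0, 1] := by
  ext i j
  fin_cases i <;> fin_cases j <;> simp [mul_apply, Fin.sum_univ_two]
  · linear_combination -h
  · linear_combination u * (1 - s) * h
  · linear_combination (s - 1) * h

section UnitsImage

variable {M : Type*} [Monoid M] {H : Subgroup Mˣ} {g : Mˣ} {x : M}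

theorem mem_map_coeHom_of_val_mul_mem (hg : g ∈ H)
    (h : ↑g * x ∈ H.toSubmonoid.map (Units.coeHom M)) :
    x ∈ H.toSubmonoid.map (Units.coeHom M) := by
  have hinv : g⁻¹ ∈ H.toSubmonoid := H.inv_mem hg
  have := mul_mem (Submonoid.mem_map_of_mem (Units.coeHom M) hinv) h
  rwa [Units.coeHom_apply, ← mul_assoc, Units.inv_mul, one_mul] at this

theorem mem_map_coeHom_of_mul_val_mem (hg : g ∈ H)
    (h : x * ↑g ∈ H.toSubmonoid.map (Units.coeHom M)) :
    x ∈ H.toSubmonoid.map (Units.coeHom M) := by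
  have hinv : g⁻¹ ∈ H.toSubmonoid := H.inv_mem hg
  have := mul_mem h (Submonoid.mem_map_of_mem (Units.coeHom M) hinv)
  rwa [Units.coeHom_apply, mul_assoc, Units.mul_inv, mul_one] at this

end UnitsImage

section

variable {m : ℕ} {hm : 2 ≤ m}

variable (m hm) in
noncomputable abbrev HmMatrices : Submonoid (Matrix (Fin 2) (Fin 2) ℝ) :=
  (Hm m hm).toSubmonoid.map (Units.coeHom _)

theorem toGL_map_mem_Hm (U : SpecialLinearGroup (Fin 2) ℤ) :
    SpecialLinearGroup.toGL (SpecialLinearGroup.map (Int.castRingHom ℝ) U) ∈ Hm m hm :=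
  Subgroup.subset_closure (Or.inl ⟨U, rfl⟩)

theorem diagm_mem_Hm : diagm m hm ∈ Hm m hm :=
  Subgroup.subset_closure (Or.inr rfl)

theorem map_intCast_mem_HmMatrices {N : Matrix (Fin 2) (Fin 2) ℤ} (hN : N.det = 1) :
    N.map (Int.cast : ℤ → ℝ) ∈ HmMatrices m hm :=
  Submonoid.mem_map_of_mem _ (toGL_map_mem_Hm ⟨N, hN⟩)

theorem coe_diagm_pow (j : ℕ) :
    ((diagm m hm ^ j : GL (Fin 2) ℝ) : Matrix (Fin 2) (Fin 2) ℝ) =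
      !![(m : ℝ) ^ j, 0; 0, 1] := by
  ext a b
  fin_cases a <;> fin_cases b <;> simp [diagm, diagonal_pow]

theorem diag_pow_mem_HmMatrices (j : ℕ) : !![(m : ℝ) ^ j, 0; 0, 1] ∈ HmMatrices m hm :=
  coe_diagm_pow j ▸ Submonoid.mem_map_of_mem _ (pow_mem diagm_mem_Hm j)

theorem upper_unipotent_mem_HmMatrices (n : ℤ) (j : ℕ) :
    !![1, (n : ℝ) / m ^ j; 0, 1] ∈ HmMatrices m hm := by
  have hmj : (m : ℝ) ^ j ≠ 0 := pow_ne_zero _ (Nat.cast_ne_zero.2 (by omega))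
  refine mem_map_coeHom_of_val_mul_mem (pow_mem diagm_mem_Hm j) ?_
  have hconj : !![(m : ℝ) ^ j, 0; 0, 1] * !![1, (n : ℝ) / m ^ j; 0, 1] =
      (!![1, n; 0, 1] : Matrix (Fin 2) (Fin 2) ℤ).map Int.cast * !![(m : ℝ) ^ j, 0; 0, 1] := by
    ext i k
    fin_cases i <;> fin_cases k <;> simp [mul_apply, Fin.sum_univ_two, mul_div_cancel₀ _ hmj]
  rw [coe_diagm_pow, hconj]
  exact mul_mem (map_intCast_mem_HmMatrices (by simp)) (diag_pow_mem_HmMatrices j)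

theorem lower_unipotent_mem_HmMatrices (n : ℤ) (j : ℕ) :
    !![1, 0; (n : ℝ) / m ^ j, 1] ∈ HmMatrices m hm := by
  have hmj : (m : ℝ) ^ j ≠ 0 := pow_ne_zero _ (Nat.cast_ne_zero.2 (by omega))
  refine mem_map_coeHom_of_mul_val_mem (pow_mem diagm_mem_Hm j) ?_
  have hconj : !![1, 0; (n : ℝ) / m ^ j, 1] * !![(m : ℝ) ^ j, 0; 0, 1] =
      !![(m : ℝ) ^ j, 0; 0, 1] * (!![1, 0; n, 1] : Matrix (Fin 2) (Fin 2) ℤ).map Int.cast := by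
    ext i k
    fin_cases i <;> fin_cases k <;> simp [mul_apply, Fin.sum_univ_two, div_mul_cancel₀ _ hmj]
  rw [coe_diagm_pow, hconj]
  exact mul_mem (diag_pow_mem_HmMatrices j) (map_intCast_mem_HmMatrices (by simp))

theorem inv_pow_smul_mem_HmMatrices_of_apply_zero_zero {M : Matrix (Fin 2) (Fin 2) ℤ} (k : ℕ)
    (hM : M 0 0 = 0) (hdet : (((m : ℝ) ^ k)⁻¹ • M.map (Int.cast : ℤ → ℝ)).det = 1) :
    ((m : ℝ) ^ k)⁻¹ • M.map (Int.cast : ℤ → ℝ) ∈ HmMatrices m hm := by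
  have hmk : (m : ℝ) ^ k ≠ 0 := pow_ne_zero _ (Nat.cast_ne_zero.2 (by omega))
  have hentries : ((m : ℝ) ^ k)⁻¹ • M.map (Int.cast : ℤ → ℝ) =
      !![0, (M 0 1 : ℝ) / m ^ k; (M 1 0 : ℝ) / m ^ k, (M 1 1 : ℝ) / m ^ k] := by
    rw [eta_fin_two (_ • _)]
    simp [hM, div_eq_inv_mul]
  rw [hentries, det_fin_two_of] at hdet
  rw [hentries, antidiag_eq_mul_unipotents _ _ _ (by linear_combination -hdet)]
  have hcorner : (M 0 1 : ℝ) / m ^ k * (1 - M 1 1 / m ^ k) =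
      ((M 0 1 * (m ^ k - M 1 1) : ℤ) : ℝ) / m ^ (2 * k) := by
    rw [pow_mul']
    push_cast
    field_simp
  rw [hcorner]
  exact mul_mem (mul_mem (upper_unipotent_mem_HmMatrices _ k) (lower_unipotent_mem_HmMatrices _ k))
    (upper_unipotent_mem_HmMatrices _ _)

end

/-- Let `m ≥ 2` be an integer and let `H_m` be the subgroup of `GL₂(ℝ)` generated by the image
of `SL₂(ℤ)` and the diagonal matrix `diag(m, 1)`.  Then `H_m` contains every matrix
`A ∈ SL₂(ℝ)` all of whose entries lie in the subring `ℤ[1/m]` of `ℝ`; that is, `H_m` contains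
`SL₂(ℤ[1/m])`: every `2×2` real matrix of determinant `1` of the form `m^{−k}·B` with `k ≥ 0`
an integer and `B` a matrix with integer entries belongs to `H_m`. -/
theorem SL2_of_Z_inv_m_subset_Hm (m : ℕ) (hm : 2 ≤ m)
    (A : Matrix (Fin 2) (Fin 2) ℝ) (hdet : A.det = 1)
    (hA : ∃ (k : ℕ) (B : Matrix (Fin 2) (Fin 2) ℤ),
      A = ((m : ℝ) ^ k)⁻¹ • B.map (Int.cast : ℤ → ℝ)) :
    ∃ g ∈ Hm m hm, ((g : GL (Fin 2) ℝ) : Matrix (Fin 2) (Fin 2) ℝ) = A := by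
  obtain ⟨k, B, rfl⟩ := hA
  obtain ⟨U, hU, hUB⟩ := exists_det_eq_one_mul_apply_zero_zero B
  have hUA : U.map (Int.cast : ℤ → ℝ) * (((m : ℝ) ^ k)⁻¹ • B.map Int.cast) =
      ((m : ℝ) ^ k)⁻¹ • (U * B).map Int.cast := by
    rw [mul_smul_comm]
    exact congrArg (_ • ·) (Matrix.map_mul (f := Int.castRingHom ℝ)).symm
  show _ ∈ HmMatrices m hm
  refine mem_map_coeHom_of_val_mul_mem (toGL_map_mem_Hm ⟨U, hU⟩) ?_
  refine hUA ▸ inv_pow_smul_mem_HmMatrices_of_apply_zero_zero k hUB ?_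
  rw [← hUA, det_mul, hdet, ← Int.cast_det, hU, Int.cast_one, one_mul]
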